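/- arXiv:2605.28952 — 5 statements merged into one kernel-verified Lean document; each statement's English description precedes it below -/
import Mathlib

section
/- Coupling/group-privacy bound: if M : X^n → O is ε-DP, then for any probability measures P, Q, Q' on X, (1/n)·KL(M(Q^n) ‖ M(P^n)) ≤ KL(Q'‖P) + ε·TV(Q', Q). -/
/-!
By Donsker–Varadhan, `KL(ν‖μ)` is the supremum of `∫ f dν - log ∫ exp f dμ` over bounded
measurable `f`, and group privacy bounds the likelihood ratio of `M Qⁿ` to `M Pⁿ` by `exp (ε n)`,
so it suffices to bound these quantities. Write `Q = m + σ`, `Q' = m + σ'` with common part `m`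
and `σ' X ≤ TV(Q', Q)` (the maximal coupling). Conditioning on the first input and inducting on
`n`, compare a mechanism fed from `Q` with one fed from `P`, the two mechanisms being allowed to
differ by a factor `exp r`: couple the first input from `Q` with one from `Q'`; where they differ
(mass `σ' X`) privacy raises `r` by `ε`, and passing from `Q'` to `P` costs `KL(Q'‖P)`, again by
Donsker–Varadhan.
-/

open MeasureTheory ProbabilityTheory
open scoped ENNReal

/-- `ε`-differential privacy for a Markov kernel `M : Xⁿ → O`. -/
def IsEpsDP {X O : Type*} [MeasurableSpace X] [MeasurableSpace O] [DecidableEq X] {n : ℕ}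
    (M : Kernel (Fin n → X) O) (ε : ℝ) : Prop :=
  ∀ x x' : Fin n → X, hammingDist x x' ≤ 1 →
    ∀ S : Set O, MeasurableSet S → M x S ≤ ENNReal.ofReal (Real.exp ε) * M x' S

/-- The output distribution of the mechanism `M` on i.i.d. input from `P`. -/
noncomputable def outDist {X O : Type*} [MeasurableSpace X] [MeasurableSpace O]
    {n : ℕ} (M : Kernel (Fin n → X) O) (P : Measure X) : Measure O :=
  (Measure.pi fun _ : Fin n => P).bind (fun x => M x)

open Classical in
/-- The Kullback–Leibler divergence `KL(ν‖μ)`, valued in `ℝ≥0∞`. -/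
noncomputable def klDiv {O : Type*} [MeasurableSpace O] (ν μ : Measure O) : ℝ≥0∞ :=
  if ν ≪ μ ∧ Integrable (llr ν μ) ν then ENNReal.ofReal (∫ o, llr ν μ o ∂ν) else ⊤

/-- The total variation distance between two measures. -/
noncomputable def tvDist {X : Type*} [MeasurableSpace X] (μ ν : Measure X) : ℝ≥0∞ :=
  ⨆ (S : Set X) (_ : MeasurableSet S), μ S - ν S

open Real Set

section Divergence

variable {α : Type*} [MeasurableSpace α]

lemma integrable_of_abs_le {μ : Measure α} [IsFiniteMeasure μ] {f : α → ℝ} {R : ℝ}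
    (hf : Measurable f) (hR : ∀ x, |f x| ≤ R) : Integrable f μ :=
  .of_bound hf.aestronglyMeasurable R (ae_of_all _ hR)

lemma integral_sub_log_integral_exp_le_integral_llr {ρ τ : Measure α} [IsProbabilityMeasure ρ]
    [IsProbabilityMeasure τ] (hρτ : ρ ≪ τ) (hllr : Integrable (llr ρ τ) ρ) {g : α → ℝ}
    (hg : Integrable g ρ) (hexp : Integrable (fun x => exp (g x)) τ) :
    ∫ x, g x ∂ρ - log (∫ x, exp (g x) ∂τ) ≤ ∫ x, llr ρ τ x ∂ρ := by
  have := isProbabilityMeasure_tilted hexp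
  have h := InformationTheory.integral_llr_add_sub_measure_univ_nonneg
    (hρτ.trans (absolutelyContinuous_tilted hexp)) (integrable_llr_tilted_right hρτ hg hllr hexp)
  rw [integral_llr_tilted_right hρτ hg hexp hllr] at h
  simp only [probReal_univ, add_sub_cancel_right] at h
  linarith

lemma integral_le_log_integral_exp {ρ : Measure α} [IsProbabilityMeasure ρ] {g : α → ℝ}
    (hg : Integrable g ρ) (hexp : Integrable (fun x => exp (g x)) ρ) :
    ∫ x, g x ∂ρ ≤ log (∫ x, exp (g x) ∂ρ) := by
  rw [le_log_iff_exp_le (integral_exp_pos hexp)]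
  exact convexOn_exp.map_integral_le continuous_exp.continuousOn isClosed_univ
    (ae_of_all _ fun _ => mem_univ _) hg hexp

lemma integral_sub_log_integral_exp_le_of_le_smul {ρ τ : Measure α} [IsProbabilityMeasure ρ]
    [IsFiniteMeasure τ] {r : ℝ} (hρτ : ρ ≤ ENNReal.ofReal (exp r) • τ) {g : α → ℝ}
    (hg : Integrable g ρ) (hexp : Integrable (fun x => exp (g x)) τ) :
    ∫ x, g x ∂ρ - log (∫ x, exp (g x) ∂τ) ≤ r := by
  have hexp' : Integrable (fun x => exp (g x)) (ENNReal.ofReal (exp r) • τ) :=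
    hexp.smul_measure ENNReal.ofReal_ne_top
  have hmono : ∫ x, exp (g x) ∂ρ ≤ exp r * ∫ x, exp (g x) ∂τ := by
    calc ∫ x, exp (g x) ∂ρ ≤ ∫ x, exp (g x) ∂(ENNReal.ofReal (exp r) • τ) :=
          integral_mono_measure hρτ (ae_of_all _ fun _ => (exp_pos _).le) hexp'
      _ = exp r * ∫ x, exp (g x) ∂τ := by
          rw [integral_smul_measure, ENNReal.toReal_ofReal (exp_pos r).le, smul_eq_mul]
  have hpos : 0 < ∫ x, exp (g x) ∂ρ := integral_exp_pos (hexp'.mono_measure hρτ)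
  have hτ : 0 < ∫ x, exp (g x) ∂τ := pos_of_mul_pos_right (hpos.trans_le hmono) (exp_pos r).le
  have hlog := log_le_log hpos hmono
  rw [log_mul (exp_pos r).ne' hτ.ne', log_exp] at hlog
  linarith [integral_le_log_integral_exp hg (hexp'.mono_measure hρτ)]

end Divergence

section LogLikelihoodRatio

variable {α : Type*} [MeasurableSpace α]

lemma rnDeriv_le_of_le_smul {ν μ : Measure α} [IsFiniteMeasure ν] [SigmaFinite μ] {c : ℝ≥0∞}
    (hc : c ≠ ∞) (h : ν ≤ c • μ) : ∀ᵐ x ∂μ, ν.rnDeriv μ x ≤ c := by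
  lift c to NNReal using hc
  rcases eq_or_ne c 0 with rfl | hc0
  · have hν : ν = 0 := Measure.nonpos_iff_eq_zero'.1 (by simpa using h)
    filter_upwards [Measure.rnDeriv_zero μ] with x hx
    simp [hν, hx]
  have h' : ν ≤ (c : NNReal) • μ := h
  have hle : ∀ᵐ x ∂((c : NNReal) • μ), ν.rnDeriv ((c : NNReal) • μ) x ≤ 1 :=
    Measure.rnDeriv_le_one_of_le h'
  replace hle := (Measure.absolutelyContinuous_smul (ENNReal.coe_ne_zero.2 hc0)).ae_le hle
  filter_upwards [hle, Measure.rnDeriv_smul_right ν μ hc0] with x hx hx'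
  rw [hx', Pi.smul_apply, ENNReal.smul_def, smul_eq_mul, ENNReal.coe_inv hc0,
    ENNReal.inv_mul_le_iff (by simpa using hc0) ENNReal.coe_ne_top, mul_one] at hx
  exact hx

lemma abs_log_toReal_le {a : ℝ≥0∞} {r : ℝ} (ha : a ≤ ENNReal.ofReal (exp r))
    (ha' : a⁻¹ ≤ ENNReal.ofReal (exp r)) : |log a.toReal| ≤ r := by
  have ha_top : a ≠ ∞ := ne_top_of_le_ne_top ENNReal.ofReal_ne_top ha
  have ha_zero : a ≠ 0 := by
    rintro rfl
    simp at ha'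
  have hpos : 0 < a.toReal := ENNReal.toReal_pos ha_zero ha_top
  have hle : a.toReal ≤ exp r := ENNReal.toReal_le_of_le_ofReal (exp_pos r).le ha
  have hle' : a.toReal⁻¹ ≤ exp r := by
    rw [← ENNReal.toReal_inv]
    exact ENNReal.toReal_le_of_le_ofReal (exp_pos r).le ha'
  rw [abs_le, neg_le, ← log_inv]
  exact ⟨(log_le_iff_le_exp (inv_pos.2 hpos)).2 hle', (log_le_iff_le_exp hpos).2 hle⟩

lemma ae_abs_llr_le {ν μ : Measure α} [IsFiniteMeasure ν] [IsFiniteMeasure μ] {r : ℝ}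
    (hνμ : ν ≤ ENNReal.ofReal (exp r) • μ) (hμν : μ ≤ ENNReal.ofReal (exp r) • ν) :
    ∀ᵐ x ∂μ, |llr ν μ x| ≤ r := by
  have hμν_ac : μ ≪ ν := Measure.absolutelyContinuous_of_le_smul hμν
  filter_upwards [rnDeriv_le_of_le_smul ENNReal.ofReal_ne_top hνμ,
    hμν_ac.ae_le (rnDeriv_le_of_le_smul ENNReal.ofReal_ne_top hμν),
    Measure.inv_rnDeriv hμν_ac] with x hνx hμx hinv
  rw [← hinv, Pi.inv_apply] at hνx
  rw [llr, ← hinv, Pi.inv_apply]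
  exact abs_log_toReal_le hνx (by rwa [inv_inv])

end LogLikelihoodRatio

section KLDivergence

variable {α : Type*} [MeasurableSpace α]

lemma klDiv_of_ac_of_integrable {ν μ : Measure α} (hac : ν ≪ μ) (hint : Integrable (llr ν μ) ν) :
    klDiv ν μ = ENNReal.ofReal (∫ x, llr ν μ x ∂ν) :=
  if_pos ⟨hac, hint⟩

/-- The Donsker–Varadhan inequality is an equality at the truncation of `llr ν μ`, which is
`llr ν μ` itself almost everywhere when the likelihood ratio is bounded. -/
lemma klDiv_le_of_forall_integral_sub_log_integral_exp_le {ν μ : Measure α}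
    [IsProbabilityMeasure ν] [IsProbabilityMeasure μ] {r C : ℝ}
    (hνμ : ν ≤ ENNReal.ofReal (exp r) • μ) (hμν : μ ≤ ENNReal.ofReal (exp r) • ν)
    (h : ∀ f : α → ℝ, Measurable f → (∀ x, |f x| ≤ r) →
      ∫ x, f x ∂ν - log (∫ x, exp (f x) ∂μ) ≤ C) :
    klDiv ν μ ≤ ENNReal.ofReal C := by
  have hac : ν ≪ μ := Measure.absolutelyContinuous_of_le_smul hνμ
  have hμ := ae_abs_llr_le hνμ hμν
  have hr : 0 ≤ r := by
    obtain ⟨x, hx⟩ := hμ.exists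
    exact (abs_nonneg _).trans hx
  set f : α → ℝ := fun x => max (-r) (min r (llr ν μ x))
  have hf_eq : f =ᵐ[μ] llr ν μ := by
    filter_upwards [hμ] with x hx
    simp only [f, min_eq_right (abs_le.1 hx).2, max_eq_right (abs_le.1 hx).1]
  have hf : Measurable f := measurable_const.max (measurable_const.min (measurable_llr ν μ))
  have hf_abs : ∀ x, |f x| ≤ r := fun x =>
    abs_le.2 ⟨le_max_left _ _, max_le (neg_le_self hr) (min_le_left _ _)⟩
  have hint : Integrable (llr ν μ) ν :=
    (integrable_of_abs_le hf hf_abs).congr (hac.ae_eq hf_eq)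
  have hexp : ∫ x, exp (f x) ∂μ = 1 := by
    have hexp_eq : (fun x => exp (f x)) =ᵐ[μ] fun x => (ν.rnDeriv μ x).toReal :=
      (hf_eq.fun_comp exp).trans
        (exp_llr_of_ac' ν μ (Measure.absolutelyContinuous_of_le_smul hμν))
    rw [integral_congr_ae hexp_eq, Measure.integral_toReal_rnDeriv hac, probReal_univ]
  have hC := h f hf hf_abs
  rw [hexp, log_one, sub_zero, integral_congr_ae (hac.ae_eq hf_eq)] at hC
  rw [klDiv_of_ac_of_integrable hac hint]
  exact ENNReal.ofReal_le_ofReal hC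

end KLDivergence

section Hamming

variable {X : Type*} [DecidableEq X] {n : ℕ}

lemma hammingDist_cons_cons (x y : X) (u v : Fin n → X) :
    hammingDist (Fin.cons x u : Fin (n + 1) → X) (Fin.cons y v) =
      (if x = y then 0 else 1) + hammingDist u v := by
  simp only [hammingDist, Finset.card_filter, Fin.sum_univ_succ, Fin.cons_zero, Fin.cons_succ,
    ite_not]

end Hamming

section Privacy

variable {X O : Type*} [MeasurableSpace X] [MeasurableSpace O] {n : ℕ}

lemma measurable_fin_cons_uncurry :
    Measurable fun p : X × (Fin n → X) => (Fin.cons p.1 p.2 : Fin (n + 1) → X) :=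
  measurable_pi_lambda _ fun i =>
    Fin.cases measurable_fst (fun j => (measurable_pi_apply j).comp measurable_snd) i

lemma measurable_fin_cons (x : X) :
    Measurable fun y : Fin n → X => (Fin.cons x y : Fin (n + 1) → X) :=
  measurable_fin_cons_uncurry.comp measurable_prodMk_left

noncomputable def fixHead (M : Kernel (Fin (n + 1) → X) O) (x : X) : Kernel (Fin n → X) O :=
  M.comap (fun y => Fin.cons x y) (measurable_fin_cons x)

@[simp]
lemma fixHead_apply (M : Kernel (Fin (n + 1) → X) O) (x : X) (y : Fin n → X) :
    fixHead M x y = M (Fin.cons x y) := rfl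

instance (M : Kernel (Fin (n + 1) → X) O) [IsMarkovKernel M] (x : X) :
    IsMarkovKernel (fixHead M x) := by
  unfold fixHead
  infer_instance

variable [DecidableEq X] {ε : ℝ}

lemma IsEpsDP.le_smul_of_hammingDist_le_one {M : Kernel (Fin n → X) O} (hM : IsEpsDP M ε)
    {z z' : Fin n → X} (h : hammingDist z z' ≤ 1) : M z ≤ ENNReal.ofReal (exp ε) • M z' :=
  Measure.le_iff.2 fun s hs => hM z z' h s hs

lemma IsEpsDP.fixHead {M : Kernel (Fin (n + 1) → X) O} (hM : IsEpsDP M ε) (x : X) :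
    IsEpsDP (fixHead M x) ε := fun y y' h s hs =>
  hM (Fin.cons x y) (Fin.cons x y') (by simpa [hammingDist_cons_cons] using h) s hs

/-- Group privacy: any two inputs are at Hamming distance at most `n`. -/
lemma IsEpsDP.le_smul {M : Kernel (Fin n → X) O} (hM : IsEpsDP M ε)
    (z z' : Fin n → X) : M z ≤ ENNReal.ofReal (exp (ε * n)) • M z' := by
  induction n with
  | zero => simp [Subsingleton.elim z z']
  | succ n ih =>
    rw [← Fin.cons_self_tail z, ← Fin.cons_self_tail z']
    calc M (Fin.cons (z 0) (Fin.tail z))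
        ≤ ENNReal.ofReal (exp ε) • M (Fin.cons (z' 0) (Fin.tail z)) :=
          hM.le_smul_of_hammingDist_le_one (by rw [hammingDist_cons_cons]; split_ifs <;> simp)
      _ ≤ ENNReal.ofReal (exp ε) •
            (ENNReal.ofReal (exp (ε * n)) • M (Fin.cons (z' 0) (Fin.tail z'))) := by
          gcongr
          exact ih (hM.fixHead (z' 0)) (Fin.tail z) (Fin.tail z')
      _ = ENNReal.ofReal (exp (ε * (n + 1 : ℕ))) • M (Fin.cons (z' 0) (Fin.tail z')) := by
          rw [smul_smul, ← ENNReal.ofReal_mul (exp_pos ε).le, ← exp_add]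
          push_cast
          ring_nf

end Privacy

section OutputDistribution

variable {X O : Type*} [MeasurableSpace X] [MeasurableSpace O] {n : ℕ}

instance (M : Kernel (Fin n → X) O) [IsMarkovKernel M] (R : Measure X) [IsProbabilityMeasure R] :
    IsProbabilityMeasure (outDist M R) := by
  unfold outDist
  infer_instance

lemma Measure.comp_le_smul_comp {α β : Type*} [MeasurableSpace α] [MeasurableSpace β]
    {κ : Kernel α β} {c : ℝ≥0∞} (hκ : ∀ a a', κ a ≤ c • κ a') (μ ν : Measure α)
    [IsProbabilityMeasure μ] [IsProbabilityMeasure ν] : κ ∘ₘ μ ≤ c • (κ ∘ₘ ν) := by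
  refine Measure.le_iff.2 fun s hs => ?_
  have hκs : Measurable fun a => κ a s := κ.measurable_coe hs
  have hpoint : ∀ a, κ a s ≤ c * ∫⁻ a', κ a' s ∂ν := fun a =>
    calc κ a s = ∫⁻ _, κ a s ∂ν := by simp
      _ ≤ ∫⁻ a', c * κ a' s ∂ν := lintegral_mono fun a' => hκ a a' s
      _ = c * ∫⁻ a', κ a' s ∂ν := lintegral_const_mul c hκs
  rw [Measure.smul_apply, smul_eq_mul, Measure.bind_apply hs κ.aemeasurable,
    Measure.bind_apply hs κ.aemeasurable]
  calc ∫⁻ a, κ a s ∂μ ≤ ∫⁻ _, c * ∫⁻ a', κ a' s ∂ν ∂μ := lintegral_mono hpoint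
    _ = c * ∫⁻ a', κ a' s ∂ν := by simp

lemma IsEpsDP.outDist_le_smul [DecidableEq X] {M : Kernel (Fin n → X) O} {ε : ℝ}
    (hM : IsEpsDP M ε) (Q P : Measure X) [IsProbabilityMeasure Q] [IsProbabilityMeasure P] :
    outDist M Q ≤ ENNReal.ofReal (exp (ε * n)) • outDist M P :=
  Measure.comp_le_smul_comp hM.le_smul _ _

lemma outDist_zero (M : Kernel (Fin 0 → X) O) (R : Measure X) :
    outDist M R = M Fin.elim0 := by
  rw [outDist, Measure.pi_of_empty _ Fin.elim0]
  exact Measure.dirac_bind M.measurable _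

end OutputDistribution

section Slicing

variable {X O : Type*} [MeasurableSpace X] [MeasurableSpace O] {n : ℕ}

/-- `x ↦ outDist (fixHead M x) R`, as a kernel. -/
noncomputable def outDistFixHead (M : Kernel (Fin (n + 1) → X) O) (R : Measure X)
    [IsProbabilityMeasure R] : Kernel X O :=
  M ∘ₖ (Kernel.id ×ₖ Kernel.const X (Measure.pi fun _ : Fin n => R)).map
    fun p => Fin.cons p.1 p.2

variable (M : Kernel (Fin (n + 1) → X) O) (R : Measure X) [IsProbabilityMeasure R]

lemma outDistFixHead_apply (x : X) : outDistFixHead M R x = outDist (fixHead M x) R := by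
  ext s hs
  rw [outDistFixHead, Kernel.comp_apply' _ _ _ hs, Kernel.map_apply _ measurable_fin_cons_uncurry,
    Kernel.prod_apply, Kernel.id_apply, Kernel.const_apply, Measure.dirac_prod,
    Measure.map_map measurable_fin_cons_uncurry measurable_prodMk_left,
    lintegral_map (M.measurable_coe hs) (measurable_fin_cons_uncurry.comp measurable_prodMk_left),
    outDist, Measure.bind_apply hs (Kernel.aemeasurable _)]
  rfl

instance [IsMarkovKernel M] : IsMarkovKernel (outDistFixHead M R) :=
  ⟨fun x => by rw [outDistFixHead_apply]; infer_instance⟩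

lemma outDist_succ : outDist M R = outDistFixHead M R ∘ₘ R := by
  have hpi : (Measure.pi fun _ : Fin (n + 1) => R) =
      (R.prod (Measure.pi fun _ : Fin n => R)).map fun p => Fin.cons p.1 p.2 := by
    rw [← (measurePreserving_piFinSuccAbove (fun _ : Fin (n + 1) => R) 0).symm.map_eq]
    congr with p : 1
    simp [MeasurableEquiv.piFinSuccAbove_symm_apply, Fin.insertNthEquiv, Fin.insertNth_zero']
  rw [outDistFixHead, ← Measure.comp_assoc, ← Measure.map_comp _ _ measurable_fin_cons_uncurry,
    ← Measure.compProd_eq_comp_prod, Measure.compProd_const, ← hpi]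
  rfl

end Slicing

section Integrals

variable {α β : Type*} [MeasurableSpace α] [MeasurableSpace β]

lemma Measure.integral_comp {κ : Kernel α β} {μ : Measure α} {f : β → ℝ}
    (hf : Integrable f (κ ∘ₘ μ)) : ∫ y, f y ∂(κ ∘ₘ μ) = ∫ x, ∫ y, f y ∂κ x ∂μ := by
  rw [Measure.comp_eq_comp_const_apply] at hf ⊢
  rw [Kernel.integral_comp hf]
  rfl

variable {μ : Measure α} {f : α → ℝ} {R : ℝ}

lemma integrable_exp_of_abs_le [IsFiniteMeasure μ] (hf : Measurable f) (hR : ∀ x, |f x| ≤ R) :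
    Integrable (fun x => exp (f x)) μ :=
  integrable_of_abs_le hf.exp fun x => by
    rw [abs_of_pos (exp_pos _)]
    exact exp_le_exp.2 (abs_le.1 (hR x)).2

variable [IsProbabilityMeasure μ]

lemma abs_integral_le_of_abs_le (hR : ∀ x, |f x| ≤ R) : |∫ x, f x ∂μ| ≤ R := by
  simpa using norm_integral_le_of_norm_le_const (μ := μ) (f := f) (ae_of_all _ hR)

lemma abs_log_integral_exp_le_of_abs_le (hf : Measurable f) (hR : ∀ x, |f x| ≤ R) :
    |log (∫ x, exp (f x) ∂μ)| ≤ R := by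
  have hint : Integrable (fun x => exp (f x)) μ := integrable_exp_of_abs_le hf hR
  have hlow : exp (-R) ≤ ∫ x, exp (f x) ∂μ := by
    simpa using integral_mono (integrable_const (exp (-R))) hint
      fun x => exp_le_exp.2 (neg_le_of_abs_le (hR x))
  have hup : ∫ x, exp (f x) ∂μ ≤ exp R := by
    simpa using integral_mono hint (integrable_const (exp R))
      fun x => exp_le_exp.2 (abs_le.1 (hR x)).2
  have hpos : 0 < ∫ x, exp (f x) ∂μ := (exp_pos _).trans_le hlow
  exact abs_le.2 ⟨(le_log_iff_exp_le hpos).2 hlow, (log_le_iff_le_exp hpos).2 hup⟩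

end Integrals

section Coupling

variable {X : Type*} [MeasurableSpace X]

lemma exists_add_eq_add_and_le_tvDist (Q Q' : Measure X) [IsFiniteMeasure Q]
    [IsFiniteMeasure Q'] :
    ∃ m σ σ' : Measure X, Q = m + σ ∧ Q' = m + σ' ∧ σ' univ ≤ tvDist Q' Q := by
  obtain ⟨S, hS, hle, hge⟩ := hahn_decomposition Q' Q
  have hS_le : Q.restrict S ≤ Q'.restrict S := Measure.le_iff.2 fun t ht => by
    rw [Measure.restrict_apply ht, Measure.restrict_apply ht]
    exact hle _ (ht.inter hS) inter_subset_right
  have hSc_le : Q'.restrict Sᶜ ≤ Q.restrict Sᶜ := Measure.le_iff.2 fun t ht => by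
    rw [Measure.restrict_apply ht, Measure.restrict_apply ht]
    exact hge _ (ht.inter hS.compl) inter_subset_right
  refine ⟨Q.restrict S + Q'.restrict Sᶜ, Q.restrict Sᶜ - Q'.restrict Sᶜ,
    Q'.restrict S - Q.restrict S, ?_, ?_, ?_⟩
  · rw [add_assoc, add_comm (Q'.restrict Sᶜ), Measure.sub_add_cancel_of_le hSc_le,
      Measure.restrict_add_restrict_compl hS]
  · rw [add_right_comm, add_comm (Q.restrict S), Measure.sub_add_cancel_of_le hS_le,
      Measure.restrict_add_restrict_compl hS]
  · rw [Measure.sub_apply MeasurableSet.univ hS_le, Measure.restrict_apply_univ,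
      Measure.restrict_apply_univ]
    exact le_iSup₂ (f := fun S (_ : MeasurableSet S) => Q' S - Q S) S hS

lemma integral_le_integral_of_forall_le_of_measure_univ_eq {σ σ' : Measure X} [IsFiniteMeasure σ]
    [IsFiniteMeasure σ'] (hσ : σ univ = σ' univ) {φ ψ : X → ℝ} (hφ : Integrable φ σ)
    (hψ : Integrable ψ σ') (h : ∀ y x, φ y ≤ ψ x) : ∫ y, φ y ∂σ ≤ ∫ x, ψ x ∂σ' := by
  rcases eq_or_ne (σ' univ) 0 with h0 | h0
  · rw [Measure.measure_univ_eq_zero.1 h0, Measure.measure_univ_eq_zero.1 (hσ.trans h0)]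
    simp
  have hσ_real : σ.real univ = σ'.real univ := by simp [measureReal_def, hσ]
  have ht : 0 < σ'.real univ := ENNReal.toReal_pos h0 (measure_ne_top _ _)
  have hpoint : ∀ x, ∫ y, φ y ∂σ ≤ σ'.real univ * ψ x := fun x => by
    simpa [hσ_real] using integral_mono hφ (integrable_const (ψ x)) fun y => h y x
  have := integral_mono (integrable_const (∫ y, φ y ∂σ)) (hψ.const_mul (σ'.real univ)) hpoint
  rw [integral_const, integral_const_mul, smul_eq_mul] at this
  exact le_of_mul_le_mul_left this ht

end Coupling

section Tensorization

variable {X : Type*} [MeasurableSpace X] {P Q Q' m σ σ' : Measure X} [IsProbabilityMeasure P]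
  [IsProbabilityMeasure Q] [IsProbabilityMeasure Q']

/-- Couple `Q` and `Q'` along their common part `m`; off the diagonal the gap `φ - χ` may grow by
`b`, which costs `b` times the mass `σ' univ` of the uncoupled part. -/
lemma integral_sub_log_integral_exp_le_of_coupling (hQ : Q = m + σ) (hQ' : Q' = m + σ')
    (hQ'P : Q' ≪ P) (hllr : Integrable (llr Q' P) Q') {φ χ : X → ℝ} (hφ : Integrable φ Q)
    (hχ : Integrable χ Q') (hexp : Integrable (fun x => exp (χ x)) P) {a b : ℝ}
    (hdiag : ∀ x, φ x - χ x ≤ a) (hoff : ∀ x y, φ y - χ x ≤ a + b) :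
    ∫ x, φ x ∂Q - log (∫ x, exp (χ x) ∂P) ≤ a + b * σ'.real univ + ∫ x, llr Q' P x ∂Q' := by
  have : IsFiniteMeasure m := isFiniteMeasure_of_le Q (hQ ▸ Measure.le_add_right le_rfl)
  have : IsFiniteMeasure σ := isFiniteMeasure_of_le Q (hQ ▸ Measure.le_add_left le_rfl)
  have : IsFiniteMeasure σ' := isFiniteMeasure_of_le Q' (hQ' ▸ Measure.le_add_left le_rfl)
  have hmass : m.real univ + σ'.real univ = 1 := by
    rw [← measureReal_add_apply, ← hQ', probReal_univ]
  have hσ : σ univ = σ' univ := by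
    have h : m univ + σ univ = m univ + σ' univ := by
      rw [← Measure.add_apply, ← Measure.add_apply, ← hQ, ← hQ', measure_univ, measure_univ]
    exact (ENNReal.add_right_inj (measure_ne_top m univ)).1 h
  rw [hQ, integrable_add_measure] at hφ
  rw [hQ', integrable_add_measure] at hχ
  have hm : ∫ x, φ x ∂m ≤ ∫ x, χ x ∂m + a * m.real univ := by
    have : ∫ x, φ x ∂m ≤ ∫ x, (χ x + a) ∂m :=
      integral_mono hφ.1 (hχ.1.add (integrable_const a)) fun x => by linarith [hdiag x]
    rwa [integral_add hχ.1 (integrable_const a), integral_const, smul_eq_mul, mul_comm] at this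
  have hσσ' : ∫ x, φ x ∂σ ≤ ∫ x, χ x ∂σ' + (a + b) * σ'.real univ := by
    have : ∫ x, φ x ∂σ ≤ ∫ x, (χ x + (a + b)) ∂σ' :=
      integral_le_integral_of_forall_le_of_measure_univ_eq hσ hφ.2
        (hχ.2.add (integrable_const (a + b))) fun y x => by linarith [hoff x y]
    rwa [integral_add hχ.2 (integrable_const _), integral_const, smul_eq_mul, mul_comm] at this
  have hDV := integral_sub_log_integral_exp_le_integral_llr hQ'P hllr
    (hQ' ▸ integrable_add_measure.2 hχ) hexp
  have hφQ : ∫ x, φ x ∂Q = ∫ x, φ x ∂m + ∫ x, φ x ∂σ := by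
    rw [hQ, integral_add_measure hφ.1 hφ.2]
  have hχQ' : ∫ x, χ x ∂Q' = ∫ x, χ x ∂m + ∫ x, χ x ∂σ' := by
    rw [hQ', integral_add_measure hχ.1 hχ.2]
  linear_combination hφQ + hm + hσσ' + hDV - hχQ' + a * hmass

variable {O : Type*} [MeasurableSpace O] [DecidableEq X] {ε : ℝ}

lemma integral_sub_log_integral_exp_outDist_le (hQ : Q = m + σ) (hQ' : Q' = m + σ')
    (hQ'P : Q' ≪ P) (hllr : Integrable (llr Q' P) Q') {n : ℕ} (Mq Mp : Kernel (Fin n → X) O)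
    [IsMarkovKernel Mq] [IsMarkovKernel Mp] (hMq : IsEpsDP Mq ε) {r : ℝ}
    (hr : ∀ z, Mq z ≤ ENNReal.ofReal (exp r) • Mp z) {f : O → ℝ} (hf : Measurable f) {R : ℝ}
    (hR : ∀ o, |f o| ≤ R) :
    ∫ o, f o ∂outDist Mq Q - log (∫ o, exp (f o) ∂outDist Mp P) ≤
      n * (∫ x, llr Q' P x ∂Q' + ε * σ'.real univ) + r := by
  induction n generalizing r with
  | zero =>
    rw [outDist_zero, outDist_zero, CharP.cast_eq_zero, zero_mul, zero_add]
    exact integral_sub_log_integral_exp_le_of_le_smul (hr _) (integrable_of_abs_le hf hR)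
      (integrable_exp_of_abs_le hf hR)
  | succ n ih =>
    set φ : X → ℝ := fun x => ∫ o, f o ∂outDistFixHead Mq Q x
    set χ : X → ℝ := fun x => log (∫ o, exp (f o) ∂outDistFixHead Mp P x)
    have hφ : Measurable φ := (hf.stronglyMeasurable.integral_kernel).measurable
    have hχ : Measurable χ := (hf.exp.stronglyMeasurable.integral_kernel).measurable.log
    have hφR : ∀ x, |φ x| ≤ R := fun x => abs_integral_le_of_abs_le hR
    have hχR : ∀ x, |χ x| ≤ R := fun x => abs_log_integral_exp_le_of_abs_le hf hR
    have hintegral_f : ∫ o, f o ∂outDist Mq Q = ∫ x, φ x ∂Q := by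
      rw [outDist_succ, Measure.integral_comp (integrable_of_abs_le hf hR)]
    have hintegral_exp : ∫ o, exp (f o) ∂outDist Mp P = ∫ x, exp (χ x) ∂P := by
      rw [outDist_succ, Measure.integral_comp (integrable_exp_of_abs_le hf hR)]
      refine integral_congr_ae (ae_of_all _ fun x => ?_)
      exact (exp_log (integral_exp_pos (integrable_exp_of_abs_le hf hR))).symm
    have hdiag : ∀ x, φ x - χ x ≤ n * (∫ x, llr Q' P x ∂Q' + ε * σ'.real univ) + r := by
      intro x
      simp only [φ, χ, outDistFixHead_apply]
      exact ih (fixHead Mq x) (fixHead Mp x) (hMq.fixHead x) fun _ => hr _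
    have hoff : ∀ x y, φ y - χ x ≤ n * (∫ x, llr Q' P x ∂Q' + ε * σ'.real univ) + r + ε := by
      intro x y
      simp only [φ, χ, outDistFixHead_apply]
      rw [add_assoc]
      refine ih (fixHead Mq y) (fixHead Mp x) (hMq.fixHead y) (fun z => ?_)
      calc Mq (Fin.cons y z) ≤ ENNReal.ofReal (exp ε) • Mq (Fin.cons x z) :=
            hMq.le_smul_of_hammingDist_le_one (by simp [hammingDist_cons_cons]; split_ifs <;> simp)
        _ ≤ ENNReal.ofReal (exp ε) • ENNReal.ofReal (exp r) • Mp (Fin.cons x z) := by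
            gcongr
            exact hr _
        _ = ENNReal.ofReal (exp (r + ε)) • Mp (Fin.cons x z) := by
            rw [smul_smul, ← ENNReal.ofReal_mul (exp_pos ε).le, ← exp_add, add_comm]
    have := integral_sub_log_integral_exp_le_of_coupling hQ hQ' hQ'P hllr
      (integrable_of_abs_le hφ hφR) (integrable_of_abs_le hχ hχR)
      (integrable_exp_of_abs_le hχ hχR) hdiag hoff
    rw [hintegral_f, hintegral_exp]
    push_cast
    linarith

end Tensorization

theorem dp_klDiv_le_klDiv_add_tv_general {X O : Type*} [MeasurableSpace X]
    [MeasurableSpace O] [DecidableEq X] {n : ℕ} (M : Kernel (Fin n → X) O)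
    [IsMarkovKernel M] (ε : ℝ) (hDP : IsEpsDP M ε)
    (P Q Q' : Measure X) [IsProbabilityMeasure P] [IsProbabilityMeasure Q]
    [IsProbabilityMeasure Q'] :
    klDiv (outDist M Q) (outDist M P) / (n : ℝ≥0∞) ≤
      klDiv Q' P + ENNReal.ofReal ε * tvDist Q' Q := by
  by_cases hKL : klDiv Q' P = ⊤
  · simp [hKL]
  obtain ⟨hQ'P, hllr⟩ : Q' ≪ P ∧ Integrable (llr Q' P) Q' := by
    by_contra h
    exact hKL (if_neg h)
  obtain ⟨m, σ, σ', hQ, hQ', htv⟩ := exists_add_eq_add_and_le_tvDist Q Q'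
  have hkl := klDiv_le_of_forall_integral_sub_log_integral_exp_le
    (hDP.outDist_le_smul Q P) (hDP.outDist_le_smul P Q)
    fun f hf hR => by
      simpa using integral_sub_log_integral_exp_outDist_le hQ hQ' hQ'P hllr M M hDP (r := 0)
        (fun _ => by simp) hf hR
  refine ENNReal.div_le_of_le_mul' (hkl.trans ?_)
  rw [klDiv_of_ac_of_integrable hQ'P hllr, ENNReal.ofReal_mul (Nat.cast_nonneg n),
    ENNReal.ofReal_natCast]
  gcongr
  refine ENNReal.ofReal_add_le.trans (add_le_add le_rfl ?_)
  rw [ENNReal.ofReal_mul' measureReal_nonneg]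
  gcongr
  exact ENNReal.ofReal_toReal_le.trans htv

/-- Coupling/group-privacy bound: if `M : Xⁿ → O` is `ε`-DP then for any
probability measures `P, Q, Q'` on `X`,
`(1/n)·KL(M(Qⁿ)‖M(Pⁿ)) ≤ KL(Q'‖P) + ε·TV(Q', Q)`. -/
theorem dp_klDiv_le_klDiv_add_tv {X O : Type*} [MeasurableSpace X]
    [MeasurableSpace O] [DecidableEq X] {n : ℕ} (M : Kernel (Fin n → X) O)
    [IsMarkovKernel M] (ε : ℝ) (hε : 0 ≤ ε) (hDP : IsEpsDP M ε)
    (P Q Q' : Measure X) [IsProbabilityMeasure P] [IsProbabilityMeasure Q]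
    [IsProbabilityMeasure Q'] :
    klDiv (outDist M Q) (outDist M P) / (n : ℝ≥0∞) ≤
      klDiv Q' P + ENNReal.ofReal ε * tvDist Q' Q :=
  dp_klDiv_le_klDiv_add_tv_general M ε hDP P Q Q'
end

section
/- Truncated scaled likelihood ratio is a bounded e-variable: for ε > 0, define tsLR_ε(x) = e^{−ε} + (1 − e^{−ε})·min(1 + e^ε, dQ/dP(x)). Then E^P[tsLR_ε] ≤ 1 and log tsLR_ε(x) ∈ [−ε, ε] for all x. -/
open MeasureTheory Real

/-!
Write `ρ = min (1 + e^ε) (dQ/dP)`. Since `ρ ≤ dQ/dP`, its `P`-mean is at most `Q(X) = 1`, and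
mixing an e-variable with the constant `1` keeps it an e-variable. Pointwise, `0 ≤ ρ ≤ 1 + e^ε`
and `e^{-ε} + (1 - e^{-ε}) (1 + e^ε) = e^ε`, so `tsLR_ε` lies in `[e^{-ε}, e^ε]`.
-/

lemma integral_min_toReal_rnDeriv_le {X : Type*} [MeasurableSpace X] (P Q : Measure X)
    [IsFiniteMeasure P] [IsFiniteMeasure Q] (c : ℝ) :
    ∫ x, min c (Q.rnDeriv P x).toReal ∂P ≤ Q.real Set.univ :=
  calc ∫ x, min c (Q.rnDeriv P x).toReal ∂P
      ≤ ∫ x, (Q.rnDeriv P x).toReal ∂P :=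
        integral_mono ((integrable_const c).inf Measure.integrable_toReal_rnDeriv)
          Measure.integrable_toReal_rnDeriv fun _ => min_le_right _ _
    _ ≤ Q.real Set.univ := by
        simpa using Measure.setIntegral_toReal_rnDeriv_le (μ := Q) (ν := P)
          (s := Set.univ) (measure_ne_top _ _)

lemma integral_const_add_one_sub_mul_le_one {X : Type*} [MeasurableSpace X] {P : Measure X}
    [IsProbabilityMeasure P] {f : X → ℝ} (hf : Integrable f P) (hf_le : ∫ x, f x ∂P ≤ 1)
    {a : ℝ} (ha : a ≤ 1) :
    ∫ x, (a + (1 - a) * f x) ∂P ≤ 1 := by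
  rw [integral_add (integrable_const a) (hf.const_mul _), integral_const, integral_const_mul,
    probReal_univ, one_smul]
  nlinarith

lemma exp_neg_add_one_sub_exp_neg_mul_one_add_exp (ε : ℝ) :
    exp (-ε) + (1 - exp (-ε)) * (1 + exp ε) = exp ε := by
  have : exp (-ε) * exp ε = 1 := by rw [← exp_add, neg_add_cancel, exp_zero]
  linear_combination -this

lemma exp_neg_add_one_sub_exp_neg_mul_mem_Icc {ε t : ℝ} (hε : 0 ≤ ε) (ht₀ : 0 ≤ t)
    (ht : t ≤ 1 + exp ε) :
    exp (-ε) + (1 - exp (-ε)) * t ∈ Set.Icc (exp (-ε)) (exp ε) := by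
  have hmix : 0 ≤ 1 - exp (-ε) := sub_nonneg.2 (exp_le_one_iff.2 (neg_nonpos.2 hε))
  constructor
  · exact le_add_of_nonneg_right (mul_nonneg hmix ht₀)
  · calc exp (-ε) + (1 - exp (-ε)) * t
        ≤ exp (-ε) + (1 - exp (-ε)) * (1 + exp ε) := by gcongr
      _ = exp ε := exp_neg_add_one_sub_exp_neg_mul_one_add_exp ε

lemma abs_log_le_of_mem_Icc_exp {ε y : ℝ} (hy : y ∈ Set.Icc (exp (-ε)) (exp ε)) :
    |log y| ≤ ε := by
  have hy₀ : 0 < y := (exp_pos _).trans_le hy.1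
  rw [abs_le, le_log_iff_exp_le hy₀, log_le_iff_le_exp hy₀]
  exact hy

theorem tsLR_evariable_general {X : Type*} [MeasurableSpace X]
    (P Q : Measure X) [IsProbabilityMeasure P] [IsProbabilityMeasure Q]
    (ε : ℝ) (hε : 0 < ε) :
    (∫ x, (Real.exp (-ε) + (1 - Real.exp (-ε)) *
        min (1 + Real.exp ε) ((Q.rnDeriv P x).toReal)) ∂P ≤ 1) ∧
    (∀ x, |Real.log (Real.exp (-ε) + (1 - Real.exp (-ε)) *
        min (1 + Real.exp ε) ((Q.rnDeriv P x).toReal))| ≤ ε) := by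
  refine ⟨?_, fun x => ?_⟩
  · have hρ : ∫ x, min (1 + exp ε) (Q.rnDeriv P x).toReal ∂P ≤ 1 := by
      simpa using integral_min_toReal_rnDeriv_le P Q (1 + exp ε)
    exact integral_const_add_one_sub_mul_le_one
      ((integrable_const _).inf Measure.integrable_toReal_rnDeriv) hρ
      (exp_le_one_iff.2 (neg_nonpos.2 hε.le))
  · exact abs_log_le_of_mem_Icc_exp <| exp_neg_add_one_sub_exp_neg_mul_mem_Icc hε.le
      (le_min (by positivity) ENNReal.toReal_nonneg) (min_le_left _ _)

/-- The truncated scaled likelihood ratio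
`tsLR_ε(x) = e^{−ε} + (1 − e^{−ε})·min(1 + e^ε, dQ/dP(x))` is an e-variable for `P`
with `log tsLR_ε ∈ [−ε, ε]` pointwise. -/
theorem tsLR_evariable {X : Type*} [MeasurableSpace X]
    (P Q : Measure X) [IsProbabilityMeasure P] [IsProbabilityMeasure Q]
    (hQP : Q ≪ P) (ε : ℝ) (hε : 0 < ε) :
    (∫ x, (Real.exp (-ε) + (1 - Real.exp (-ε)) *
        min (1 + Real.exp ε) ((Q.rnDeriv P x).toReal)) ∂P ≤ 1) ∧
    (∀ x, |Real.log (Real.exp (-ε) + (1 - Real.exp (-ε)) *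
        min (1 + Real.exp ε) ((Q.rnDeriv P x).toReal))| ≤ ε) :=
  tsLR_evariable_general P Q ε hε
end

section
/- Pointwise domination for tsLR: for all x, log tsLR_ε(x) ≥ (1 − e^{−ε})·log min(e^ε, dQ/dP(x)), where tsLR_ε(x) = e^{−ε} + (1−e^{−ε})·min(1+e^ε, dQ/dP(x)). -/
/-- Pointwise domination for the truncated scaled likelihood ratio: for every
positive value `t` of the density ratio `dQ/dP` and every `ε > 0`,
`log tsLR_ε ≥ (1 − e^{−ε})·log min(e^ε, t)`, where
`tsLR_ε = e^{−ε} + (1 − e^{−ε})·min(1 + e^ε, t)`. -/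
theorem tsLR_pointwise_domination (ε : ℝ) (hε : 0 < ε) (t : ℝ) (ht : 0 < t) :
    (1 - Real.exp (-ε)) * Real.log (min (Real.exp ε) t) ≤
      Real.log (Real.exp (-ε) + (1 - Real.exp (-ε)) * min (1 + Real.exp ε) t) := by
  set a := Real.exp (-ε) with ha
  have ha0 : 0 < a := Real.exp_pos _
  have ha1 : a < 1 := by
    rw [ha]
    have := Real.exp_lt_one_iff.mpr (by linarith : -ε < 0)
    exact this
  set s := min (1 + Real.exp ε) t with hs
  have hspos : 0 < s := lt_min (by positivity) ht
  have hmpos : 0 < min (Real.exp ε) t := lt_min (Real.exp_pos _) ht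
  have hms : min (Real.exp ε) t ≤ s := by
    apply min_le_min _ le_rfl
    have := Real.exp_pos ε
    linarith
  have hw : 0 ≤ 1 - a := by linarith
  -- weighted AM-GM: 1^a * s^(1-a) ≤ a*1 + (1-a)*s
  have hgm : s ^ (1 - a) ≤ a + (1 - a) * s := by
    have := Real.geom_mean_le_arith_mean2_weighted (le_of_lt ha0) hw
      (zero_le_one) (le_of_lt hspos) (by ring)
    simpa using this
  calc (1 - a) * Real.log (min (Real.exp ε) t)
      ≤ (1 - a) * Real.log s :=
        mul_le_mul_of_nonneg_left (Real.log_le_log hmpos hms) hw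
    _ = Real.log (s ^ (1 - a)) := (Real.log_rpow hspos _).symm
    _ ≤ Real.log (a + (1 - a) * s) :=
        Real.log_le_log (Real.rpow_pos_of_pos hspos _) hgm
end

section
/- E-power of the clipped likelihood ratio under truncation level e^ε: with τ = ∫ max(q − e^ε p, 0) (the hockey-stick divergence) and B = {q > e^ε p}, we have E^Q[log min(e^ε, q/p)] = ε·e^ε·P(B) + ε·τ + ∫_{X∖B} q·log(q/p), and this quantity is at least ((ε−1)/ε)·(KL(Q'‖P)·(1−τ) + τε) where Q' has density min(q, e^ε p)/(1−τ). -/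
open MeasureTheory

/-- E-power of the likelihood ratio clipped at level `e^ε`: with densities `p, q`
w.r.t. `μ`, hockey-stick divergence `τ = ∫ max(q − e^ε p, 0)` and
`B = {q > e^ε p}`, one has
`E^Q[log min(e^ε, q/p)] = ε·e^ε·P(B) + ε·τ + ∫_{X∖B} q·log(q/p)`, and this is at
least `((ε−1)/ε)·((1−τ)·KL(Q'‖P) + τ·ε)` where `Q'` has density
`min(q, e^ε p)/(1−τ)`. -/
theorem clipped_lr_epower_truncation {X : Type*} [MeasurableSpace X] (μ : Measure X)
    (p q : X → ℝ) (hp : Measurable p) (hq : Measurable q)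
    (hp0 : ∀ x, 0 ≤ p x) (hq0 : ∀ x, 0 ≤ q x)
    (hp1 : ∫ x, p x ∂μ = 1) (hq1 : ∫ x, q x ∂μ = 1)
    (hac : ∀ x, p x = 0 → q x = 0)
    (ε : ℝ) (hε : 1 < ε)
    (τ : ℝ) (hτ : τ = ∫ x, max (q x - Real.exp ε * p x) 0 ∂μ) (hτ1 : τ < 1)
    (B : Set X) (hB : B = {x | q x > Real.exp ε * p x})
    (q' : X → ℝ) (hq' : q' = fun x => min (q x) (Real.exp ε * p x) / (1 - τ))
    (hint1 : Integrable (fun x => q x * Real.log (min (Real.exp ε) (q x / p x))) μ)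
    (hint2 : Integrable (fun x => q x * Real.log (q x / p x)) (μ.restrict Bᶜ))
    (hint3 : Integrable (fun x => q' x * Real.log (q' x / p x)) μ) :
    (∫ x, q x * Real.log (min (Real.exp ε) (q x / p x)) ∂μ =
        ε * Real.exp ε * (∫ x in B, p x ∂μ) + ε * τ +
          ∫ x in Bᶜ, q x * Real.log (q x / p x) ∂μ) ∧
    ((ε - 1) / ε * ((1 - τ) * (∫ x, q' x * Real.log (q' x / p x) ∂μ) + τ * ε) ≤
      ∫ x, q x * Real.log (min (Real.exp ε) (q x / p x)) ∂μ) := by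
  have hεpos : (0:ℝ) < ε := by linarith
  set c := Real.exp ε with hc
  have hc0 : (0:ℝ) < c := Real.exp_pos ε
  have h1τ : (0:ℝ) < 1 - τ := by linarith
  -- basic integrability
  have hpint : Integrable p μ := integrable_of_integral_eq_one hp1
  have hqint : Integrable q μ := integrable_of_integral_eq_one hq1
  have hmax_meas : Measurable (fun x => max (q x - c * p x) 0) :=
    (hq.sub (hp.const_mul c)).max measurable_const
  have hmax_nonneg : ∀ x, 0 ≤ max (q x - c * p x) 0 := fun x => le_max_right _ _
  have hmax_le : ∀ x, max (q x - c * p x) 0 ≤ q x := fun x =>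
    max_le (by nlinarith [hp0 x]) (hq0 x)
  have hmax_int : Integrable (fun x => max (q x - c * p x) 0) μ := by
    refine hqint.mono hmax_meas.aestronglyMeasurable (ae_of_all _ fun x => ?_)
    rw [Real.norm_eq_abs, Real.norm_eq_abs, abs_of_nonneg (hmax_nonneg x),
      abs_of_nonneg (hq0 x)]
    exact hmax_le x
  set m : X → ℝ := fun x => min (q x) (c * p x) with hm
  have hm_nonneg : ∀ x, 0 ≤ m x := fun x => le_min (hq0 x) (mul_nonneg hc0.le (hp0 x))
  have hm_meas : Measurable m := hq.min (hp.const_mul c)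
  have hm_int : Integrable m μ := by
    refine hqint.mono hm_meas.aestronglyMeasurable (ae_of_all _ fun x => ?_)
    rw [Real.norm_eq_abs, Real.norm_eq_abs, abs_of_nonneg (hm_nonneg x),
      abs_of_nonneg (hq0 x)]
    exact min_le_left _ _
  have hm_eq : ∀ x, m x = q x - max (q x - c * p x) 0 := by
    intro x
    rcases le_total (q x) (c * p x) with h | h
    · rw [hm]; simp only
      rw [min_eq_left h, max_eq_right (sub_nonpos.mpr h), sub_zero]
    · rw [hm]; simp only
      rw [min_eq_right h, max_eq_left (sub_nonneg.mpr h)]; ring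
  have hm_integral : ∫ x, m x ∂μ = 1 - τ := by
    have : (fun x => m x) = fun x => q x - max (q x - c * p x) 0 := funext hm_eq
    rw [this, integral_sub hqint hmax_int, hq1, hτ]
  have hBmeas : MeasurableSet B := by
    rw [hB]; exact measurableSet_lt (hp.const_mul c) hq
  -- positivity facts on B
  have hBp : ∀ x ∈ B, 0 < p x := by
    intro x hx
    rw [hB] at hx
    rcases (hp0 x).eq_or_lt with h | h
    · exfalso
      have hq0' := hac x h.symm
      simp only [Set.mem_setOf_eq, ← h, mul_zero, hq0'] at hx
      exact lt_irrefl 0 hx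
    · exact h
  have hBlt : ∀ x ∈ B, c * p x < q x := by
    intro x hx; rw [hB] at hx; exact hx
  have hBcle : ∀ x ∈ Bᶜ, q x ≤ c * p x := by
    intro x hx
    rw [hB] at hx
    simpa using not_lt.mp (by simpa [Set.mem_compl_iff, Set.mem_setOf_eq] using hx)
  -- positive q on Bᶜ implies positive p
  have hpos_bc : ∀ x, 0 < q x → 0 < p x := by
    intro x hx
    rcases (hp0 x).eq_or_lt with h | h
    · exfalso; rw [hac x h.symm] at hx; exact lt_irrefl 0 hx
    · exact h
  -- τ = ∫_B (q - c p)
  have hτB : τ = (∫ x in B, q x ∂μ) - c * ∫ x in B, p x ∂μ := by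
    have e0 : τ = (∫ x in B, max (q x - c * p x) 0 ∂μ) +
        ∫ x in Bᶜ, max (q x - c * p x) 0 ∂μ := by
      rw [hτ, integral_add_compl hBmeas hmax_int]
    have e1 : (∫ x in B, max (q x - c * p x) 0 ∂μ) = ∫ x in B, (q x - c * p x) ∂μ := by
      refine setIntegral_congr_fun hBmeas fun x hx => ?_
      exact max_eq_left (by nlinarith [hBlt x hx])
    have e2 : (∫ x in Bᶜ, max (q x - c * p x) 0 ∂μ) = 0 := by
      rw [setIntegral_congr_fun hBmeas.compl (g := fun _ => (0:ℝ))
        (fun x hx => max_eq_right (by nlinarith [hBcle x hx]))]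
      simp
    rw [e0, e1, e2, add_zero,
      integral_sub (hqint.restrict) ((hpint.restrict).const_mul c), integral_const_mul]
  -- Part 1: the equality
  have hEB : ∀ x ∈ B, q x * Real.log (min c (q x / p x)) = q x * ε := by
    intro x hx
    have hpx := hBp x hx
    have : c < q x / p x := (lt_div_iff₀ hpx).mpr (hBlt x hx)
    rw [min_eq_left this.le, hc, Real.log_exp]
  have hEBc : ∀ x ∈ Bᶜ, q x * Real.log (min c (q x / p x)) =
      q x * Real.log (q x / p x) := by
    intro x hx
    rcases (hq0 x).eq_or_lt with h | h
    · rw [← h]; ring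
    · have hpx := hpos_bc x h
      have : q x / p x ≤ c := (div_le_iff₀ hpx).mpr (by nlinarith [hBcle x hx])
      rw [min_eq_right this]
  have hsplit : ∫ x, q x * Real.log (min c (q x / p x)) ∂μ =
      (∫ x in B, q x * Real.log (min c (q x / p x)) ∂μ) +
        ∫ x in Bᶜ, q x * Real.log (min c (q x / p x)) ∂μ :=
    (integral_add_compl hBmeas hint1).symm
  have hIB : (∫ x in B, q x * Real.log (min c (q x / p x)) ∂μ) =
      ε * ∫ x in B, q x ∂μ := by
    rw [setIntegral_congr_fun hBmeas hEB]
    rw [show (fun x => q x * ε) = fun x => ε * q x from funext fun x => mul_comm _ _,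
      integral_const_mul]
  have hIBc : (∫ x in Bᶜ, q x * Real.log (min c (q x / p x)) ∂μ) =
      ∫ x in Bᶜ, q x * Real.log (q x / p x) ∂μ :=
    setIntegral_congr_fun hBmeas.compl hEBc
  have hpart1 : ∫ x, q x * Real.log (min c (q x / p x)) ∂μ =
      ε * c * (∫ x in B, p x ∂μ) + ε * τ +
        ∫ x in Bᶜ, q x * Real.log (q x / p x) ∂μ := by
    rw [hsplit, hIB, hIBc]
    have : (∫ x in B, q x ∂μ) = τ + c * ∫ x in B, p x ∂μ := by linarith [hτB]
    rw [this]; ring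
  refine ⟨hpart1, ?_⟩
  -- Part 2: the inequality
  set KL : ℝ := ∫ x, q' x * Real.log (q' x / p x) ∂μ with hKLdef
  -- q' basic facts
  have hq'x : ∀ x, q' x = m x / (1 - τ) := by intro x; rw [hq']
  have hq'_nonneg : ∀ x, 0 ≤ q' x := fun x => by
    rw [hq'x]; exact div_nonneg (hm_nonneg x) h1τ.le
  have hq'_int : Integrable q' μ := by
    have : q' = fun x => m x / (1 - τ) := funext hq'x
    rw [this]; exact hm_int.div_const _
  have hq'_integral : ∫ x, q' x ∂μ = 1 := by
    have : q' = fun x => m x / (1 - τ) := funext hq'x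
    rw [this, integral_div, hm_integral, div_self h1τ.ne']
  -- pointwise key identity relating m·log(m/p) to q'·log(q'/p)
  have hkey : ∀ x, m x * Real.log (m x / p x) =
      (1 - τ) * (q' x * Real.log (q' x / p x)) + Real.log (1 - τ) * m x := by
    intro x
    rcases (hm_nonneg x).eq_or_lt with h0 | hpos
    · rw [hq'x, ← h0]; simp
    · have hqx : 0 < q x := lt_of_lt_of_le hpos (min_le_left _ _)
      have hpx : 0 < p x := hpos_bc x hqx
      have hq'pos : 0 < q' x := by rw [hq'x]; positivity
      have e1 : q' x / p x = m x / p x / (1 - τ) := by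
        rw [hq'x x, div_div, div_div, mul_comm]
      have e2 : Real.log (q' x / p x) =
          Real.log (m x) - Real.log (p x) - Real.log (1 - τ) := by
        rw [e1, Real.log_div (div_pos hpos hpx).ne' h1τ.ne',
          Real.log_div hpos.ne' hpx.ne']
      rw [Real.log_div hpos.ne' hpx.ne', e2, hq'x x]
      field_simp
      ring
  have hf_int : Integrable (fun x => m x * Real.log (m x / p x)) μ := by
    have : (fun x => m x * Real.log (m x / p x)) =
        fun x => (1 - τ) * (q' x * Real.log (q' x / p x)) + Real.log (1 - τ) * m x :=
      funext hkey
    rw [this]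
    exact (hint3.const_mul _).add (hm_int.const_mul _)
  have hf_val : ∫ x, m x * Real.log (m x / p x) ∂μ =
      (1 - τ) * KL + Real.log (1 - τ) * (1 - τ) := by
    have e : (fun x => m x * Real.log (m x / p x)) =
        fun x => (1 - τ) * (q' x * Real.log (q' x / p x)) + Real.log (1 - τ) * m x :=
      funext hkey
    rw [e, integral_add (hint3.const_mul _) (hm_int.const_mul _),
      integral_const_mul, integral_const_mul, hm_integral, hKLdef]
  -- split ∫ m log(m/p)
  have hfB : (∫ x in B, m x * Real.log (m x / p x) ∂μ) = ε * c * ∫ x in B, p x ∂μ := by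
    have e : ∀ x ∈ B, m x * Real.log (m x / p x) = ε * c * p x := by
      intro x hx
      have hpx := hBp x hx
      have hmx : m x = c * p x := min_eq_right (hBlt x hx).le
      rw [hmx, mul_div_assoc, div_self hpx.ne', mul_one, hc, Real.log_exp]
      ring
    rw [setIntegral_congr_fun hBmeas e, integral_const_mul]
  have hfBc : (∫ x in Bᶜ, m x * Real.log (m x / p x) ∂μ) =
      ∫ x in Bᶜ, q x * Real.log (q x / p x) ∂μ := by
    refine setIntegral_congr_fun hBmeas.compl fun x hx => ?_
    have hmx : m x = q x := min_eq_left (hBcle x hx)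
    rw [hmx]
  have hf_split : ∫ x, m x * Real.log (m x / p x) ∂μ =
      ε * c * (∫ x in B, p x ∂μ) + ∫ x in Bᶜ, q x * Real.log (q x / p x) ∂μ := by
    rw [← integral_add_compl hBmeas hf_int, hfB, hfBc]
  -- KL ≥ 0 (Gibbs)
  have hKL0 : 0 ≤ KL := by
    have hpw : ∀ x, q' x - p x ≤ q' x * Real.log (q' x / p x) := by
      intro x
      rcases (hq'_nonneg x).eq_or_lt with h0 | hpos
      · rw [← h0]; simp [hp0 x]
      · have hmx : 0 < m x := by
          by_contra h
          have : m x = 0 := le_antisymm (not_lt.mp h) (hm_nonneg x)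
          rw [hq'x, this] at hpos; simp at hpos
        have hqx : 0 < q x := lt_of_lt_of_le hmx (min_le_left _ _)
        have hpx : 0 < p x := hpos_bc x hqx
        have hlog := Real.log_le_sub_one_of_pos (show 0 < p x / q' x by positivity)
        have hinv : Real.log (p x / q' x) = - Real.log (q' x / p x) := by
          rw [← Real.log_inv, inv_div]
        rw [hinv] at hlog
        have h2 : 1 - p x / q' x ≤ Real.log (q' x / p x) := by linarith
        have h3 := mul_le_mul_of_nonneg_left h2 hpos.le
        calc q' x - p x = q' x * (1 - p x / q' x) := by field_simp
          _ ≤ q' x * Real.log (q' x / p x) := h3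
    have := integral_mono (hq'_int.sub hpint) hint3 hpw
    simp only [Pi.sub_apply] at this
    rw [integral_sub hq'_int hpint, hq'_integral, hp1] at this
    simpa using this
  -- (1-τ)·log(1-τ) + τ ≥ 0
  have hlogτ : -τ ≤ (1 - τ) * Real.log (1 - τ) := by
    have h := Real.log_le_sub_one_of_pos (show 0 < (1 - τ)⁻¹ by positivity)
    rw [Real.log_inv] at h
    have hmul := mul_le_mul_of_nonneg_left h h1τ.le
    have hcancel : (1 - τ) * (1 - τ)⁻¹ = 1 := mul_inv_cancel₀ h1τ.ne'
    nlinarith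
  -- finish
  rw [hpart1]
  have hE : ε * c * (∫ x in B, p x ∂μ) + ∫ x in Bᶜ, q x * Real.log (q x / p x) ∂μ =
      (1 - τ) * KL + Real.log (1 - τ) * (1 - τ) := by rw [← hf_split, hf_val]
  rw [div_mul_eq_mul_div, div_le_iff₀ hεpos]
  have hKLτ : 0 ≤ (1 - τ) * KL := mul_nonneg h1τ.le hKL0
  nlinarith [mul_le_mul_of_nonneg_left hlogτ hεpos.le]
end

section
/- Geometric decomposition of a test supermartingale with noise: let (M_t) be a test supermartingale for P (M_t ≥ 0, E^P[M_0] ≤ 1, E^P[M_t | F_{t−1}] ≤ M_{t−1}), Λ_t = log M_t, λ ∈ (0,1], and (ξ_t) a noise process with Λ̃_t = Λ_t + ξ_t where each increment ξ_t − ξ_{t−1} is independent of Λ_t given the past outputs. Define K_t(λ) = log E^P[exp(λ(ξ_t − ξ_{t−1})) | past]. Then E_t = exp(λΛ̃_t − Σ_{i≤t} K_i(λ)) is a test supermartingale for P (hence an e-process). -/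
/-!
Write `E_{t+1} = E_t · e^{-K_{t+1}} · A · B` with `A = e^{λ(Λ_{t+1} - Λ_t)} = (M_{t+1} / M_t)^λ`
and `B = e^{λ(ξ_{t+1} - ξ_t)}`. The factor `E_t · e^{-K_{t+1}}` is known at time `t`, and the
conditional independence splits `E[A B | ℱ_t]` into `E[A | ℱ_t] · e^{K_{t+1}}`, so it remains to
see `E[A | ℱ_t] ≤ 1`. This is conditional Jensen for the concave map `x ↦ x^λ`:
`E[A | ℱ_t] ≤ E[M_{t+1} / M_t | ℱ_t]^λ ≤ 1`. Integrability of `M_{t+1} / M_t` is not free; it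
holds because pulling out `M_t⁻¹` works for lower Lebesgue integrals with no integrability
assumption. The bound at time `0` is the unconditional Jensen inequality `E[M_0^λ] ≤ E[M_0]^λ`.
-/

open MeasureTheory Finset

open scoped ENNReal

theorem Real.exp_mul_log_sub_log {x y : ℝ} (hx : 0 < x) (hy : 0 < y) (p : ℝ) :
    Real.exp (p * (Real.log y - Real.log x)) = (y / x) ^ p := by
  rw [Real.rpow_def_of_pos (div_pos hy hx), Real.log_div hy.ne' hx.ne', mul_comm]

namespace MeasureTheory

variable {Ω : Type*} {m m0 : MeasurableSpace Ω} {μ : Measure Ω}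

theorem lintegral_condLExp_mul (hm : m ≤ m0) [SigmaFinite (μ.trim hm)] {X f : Ω → ℝ≥0∞}
    (hX : AEMeasurable X μ) (hf : Measurable[m] f) :
    ∫⁻ ω, μ⁻[X|m] ω * f ω ∂μ = ∫⁻ ω, X ω * f ω ∂μ := by
  have htrim : (μ.withDensity μ⁻[X|m]).trim hm = (μ.withDensity X).trim hm := by
    refine @Measure.ext _ m _ _ fun s hs => ?_
    rw [trim_measurableSet_eq hm hs, trim_measurableSet_eq hm hs, withDensity_apply _ (hm s hs),
      withDensity_apply _ (hm s hs), setLIntegral_condLExp hm μ X hs]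
  have hf0 : Measurable f := hf.mono hm le_rfl
  calc ∫⁻ ω, μ⁻[X|m] ω * f ω ∂μ
      = ∫⁻ ω, f ω ∂(μ.withDensity μ⁻[X|m]).trim hm := by
        rw [lintegral_trim hm hf, lintegral_withDensity_eq_lintegral_mul _
          ((measurable_condLExp m μ X).mono hm le_rfl) hf0]
        rfl
    _ = ∫⁻ ω, X ω * f ω ∂μ := by
        rw [htrim, lintegral_trim hm hf,
          lintegral_withDensity_eq_lintegral_mul₀ hX hf0.aemeasurable]
        rfl

theorem integrable_mul_of_integrable_condExp_mul (hm : m ≤ m0) [SigmaFinite (μ.trim hm)]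
    {g φ : Ω → ℝ} (hg : Integrable g μ) (hg0 : 0 ≤ᵐ[μ] g) (hφ : StronglyMeasurable[m] φ)
    (hφ0 : 0 ≤ φ) (h : Integrable (μ[g|m] * φ) μ) : Integrable (g * φ) μ := by
  refine ⟨hg.aestronglyMeasurable.mul (hφ.mono hm).aestronglyMeasurable, ?_⟩
  have hcond0 : 0 ≤ᵐ[μ] μ[g|m] := condExp_nonneg hg0
  have key := lintegral_condLExp_mul hm (X := fun ω => ENNReal.ofReal (g ω))
    hg.aestronglyMeasurable.aemeasurable.ennreal_ofReal hφ.measurable.ennreal_ofReal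
  have hgφ0 : 0 ≤ᵐ[μ] g * φ := by
    filter_upwards [hg0] with ω hω using mul_nonneg hω (hφ0 ω)
  rw [hasFiniteIntegral_iff_ofReal hgφ0]
  calc ∫⁻ ω, ENNReal.ofReal ((g * φ) ω) ∂μ
      = ∫⁻ ω, ENNReal.ofReal (g ω) * ENNReal.ofReal (φ ω) ∂μ := by
        refine lintegral_congr_ae ?_
        filter_upwards [hg0] with ω hω using ENNReal.ofReal_mul hω
    _ = ∫⁻ ω, ENNReal.ofReal ((μ[g|m] * φ) ω) ∂μ := by
        rw [← key]
        refine lintegral_congr_ae ?_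
        filter_upwards [condLExp_ofReal m hg hg0, hcond0] with ω hω hω0
        rw [hω, Pi.mul_apply, ENNReal.ofReal_mul hω0]
    _ < ∞ := (hasFiniteIntegral_iff_ofReal (by
        filter_upwards [hcond0] with ω hω using mul_nonneg hω (hφ0 ω))).1 h.2

theorem Integrable.rpow_of_le_one [IsFiniteMeasure μ] {r : Ω → ℝ} {p : ℝ} (hr : Integrable r μ)
    (hr0 : 0 ≤ r) (hp0 : 0 ≤ p) (hp1 : p ≤ 1) : Integrable (fun ω => r ω ^ p) μ := by
  refine Integrable.mono' ((integrable_const 1).add hr)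
    (hr.aestronglyMeasurable.aemeasurable.pow_const p).aestronglyMeasurable
    (ae_of_all _ fun ω => ?_)
  have h0 : 0 ≤ r ω := hr0 ω
  rw [Real.norm_of_nonneg (Real.rpow_nonneg h0 p), Pi.add_apply]
  rcases le_total (r ω) 1 with h | h
  · linarith [Real.rpow_le_one h0 h hp0]
  · linarith [Real.rpow_le_self_of_one_le h hp1]

theorem condExp_rpow_le_one (hm : m ≤ m0) [IsFiniteMeasure μ] {r : Ω → ℝ} {p : ℝ}
    (hr : Integrable r μ) (hr0 : 0 ≤ r) (hp0 : 0 ≤ p) (hp1 : p ≤ 1) (hle : μ[r|m] ≤ᵐ[μ] 1) :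
    μ[fun ω => r ω ^ p|m] ≤ᵐ[μ] 1 := by
  have jensen := (Real.concaveOn_rpow hp0 hp1).condExp_map_le hm
    (((Real.continuous_rpow_const hp0).continuousOn).upperSemicontinuousOn)
    (ae_of_all _ hr0) isClosed_Ici hr (hr.rpow_of_le_one hr0 hp0 hp1)
  filter_upwards [jensen, hle, condExp_nonneg (m := m) (ae_of_all _ hr0)]
    with ω hjensen hle hnonneg
  exact hjensen.trans (Real.rpow_le_one hnonneg hle hp0)

theorem integral_rpow_le_one [IsProbabilityMeasure μ] {r : Ω → ℝ} {p : ℝ}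
    (hr : Integrable r μ) (hr0 : 0 ≤ r) (hp0 : 0 ≤ p) (hp1 : p ≤ 1) (hle : ∫ ω, r ω ∂μ ≤ 1) :
    ∫ ω, r ω ^ p ∂μ ≤ 1 :=
  ((Real.concaveOn_rpow hp0 hp1).le_map_integral
    ((Real.continuous_rpow_const hp0).continuousOn) isClosed_Ici
    (ae_of_all _ hr0) hr (hr.rpow_of_le_one hr0 hp0 hp1)).trans
    (Real.rpow_le_one (integral_nonneg hr0) hle hp0)

section Ratio

variable [IsFiniteMeasure μ] {X Y : Ω → ℝ}

theorem integrable_div_of_condExp_le (hm : m ≤ m0) (hX : StronglyMeasurable[m] X)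
    (hXpos : ∀ ω, 0 < X ω) (hY : Integrable Y μ) (hY0 : 0 ≤ Y) (hle : μ[Y|m] ≤ᵐ[μ] X) :
    Integrable (Y / X) μ := by
  have hXinv : StronglyMeasurable[m] X⁻¹ := hX.measurable.inv.stronglyMeasurable
  have hbound : Integrable (μ[Y|m] * X⁻¹) μ := by
    refine .of_bound ((stronglyMeasurable_condExp.mul hXinv).mono hm).aestronglyMeasurable 1 ?_
    filter_upwards [hle, condExp_nonneg (m := m) (ae_of_all μ hY0)] with ω hle h0
    rw [Pi.mul_apply, Pi.inv_apply, ← div_eq_mul_inv,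
      Real.norm_of_nonneg (div_nonneg h0 (hXpos ω).le)]
    exact div_le_one_of_le₀ hle (hXpos ω).le
  rw [div_eq_mul_inv]
  exact integrable_mul_of_integrable_condExp_mul hm hY (ae_of_all _ hY0) hXinv
    (fun ω => (inv_pos.2 (hXpos ω)).le) hbound

theorem condExp_div_le_one (hm : m ≤ m0) (hX : StronglyMeasurable[m] X)
    (hXpos : ∀ ω, 0 < X ω) (hY : Integrable Y μ) (hY0 : 0 ≤ Y) (hle : μ[Y|m] ≤ᵐ[μ] X) :
    μ[Y / X|m] ≤ᵐ[μ] 1 := by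
  have hpull : μ[Y * X⁻¹|m] =ᵐ[μ] μ[Y|m] * X⁻¹ :=
    condExp_mul_of_stronglyMeasurable_right hX.measurable.inv.stronglyMeasurable
      (div_eq_mul_inv Y X ▸ integrable_div_of_condExp_le hm hX hXpos hY hY0 hle) hY
  rw [div_eq_mul_inv]
  filter_upwards [hpull, hle] with ω hpull hle
  rw [hpull, Pi.mul_apply, Pi.inv_apply, ← div_eq_mul_inv]
  exact div_le_one_of_le₀ hle (hXpos ω).le

theorem condExp_exp_mul_log_sub_log_le_one (hm : m ≤ m0) (hX : StronglyMeasurable[m] X)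
    (hXpos : ∀ ω, 0 < X ω) (hYpos : ∀ ω, 0 < Y ω) (hY : Integrable Y μ) (hle : μ[Y|m] ≤ᵐ[μ] X)
    {p : ℝ} (hp0 : 0 ≤ p) (hp1 : p ≤ 1) :
    Integrable (fun ω => Real.exp (p * (Real.log (Y ω) - Real.log (X ω)))) μ ∧
      μ[fun ω => Real.exp (p * (Real.log (Y ω) - Real.log (X ω)))|m] ≤ᵐ[μ] 1 := by
  have hY0 : 0 ≤ Y := fun ω => (hYpos ω).le
  have hratio0 : 0 ≤ Y / X := fun ω => (div_pos (hYpos ω) (hXpos ω)).le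
  have hratio := integrable_div_of_condExp_le hm hX hXpos hY hY0 hle
  simp_rw [fun ω => Real.exp_mul_log_sub_log (hXpos ω) (hYpos ω) p]
  exact ⟨hratio.rpow_of_le_one hratio0 hp0 hp1,
    condExp_rpow_le_one hm hratio hratio0 hp0 hp1 (condExp_div_le_one hm hX hXpos hY hY0 hle)⟩

end Ratio

theorem condExp_le_of_condExp_mul_eq_mul (hm : m ≤ m0) [IsFiniteMeasure μ] [NeZero μ]
    {A B C k F : Ω → ℝ} (hC : StronglyMeasurable[m] C) (hC0 : 0 ≤ C)
    (hk : StronglyMeasurable[m] k) (hA : Integrable A μ) (hApos : ∀ ω, 0 < A ω)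
    (hAle : μ[A|m] ≤ᵐ[μ] 1) (hB : μ[B|m] =ᵐ[μ] fun ω => Real.exp (k ω))
    (hAB : μ[fun ω => A ω * B ω|m] =ᵐ[μ] fun ω => μ[A|m] ω * μ[B|m] ω)
    (hF : Integrable F μ) (hFeq : ∀ ω, F ω = C ω * Real.exp (-k ω) * (A ω * B ω)) :
    μ[F|m] ≤ᵐ[μ] C := by
  -- otherwise `μ[A * B|m] = 0` by convention, which would force `μ[A|m] = 0` and `∫ A = 0`
  have hABint : Integrable (fun ω => A ω * B ω) μ := by
    by_contra hnot
    have hA0 : μ[A|m] =ᵐ[μ] 0 := by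
      filter_upwards [hAB, hB] with ω hAB hB
      rw [condExp_of_not_integrable hnot, hB, Pi.zero_apply] at hAB
      exact (mul_eq_zero.1 hAB.symm).resolve_right (Real.exp_pos _).ne'
    have hpos : 0 < ∫ ω, A ω ∂μ := by
      rw [integral_pos_iff_support_of_nonneg (fun ω => (hApos ω).le) hA,
        Function.support_eq_univ fun ω => (hApos ω).ne']
      simpa using NeZero.ne μ
    rw [← integral_condExp hm, integral_congr_ae hA0] at hpos
    simp at hpos
  obtain rfl : F = fun ω => C ω * Real.exp (-k ω) * (A ω * B ω) := funext hFeq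
  have hpull : μ[fun ω => C ω * Real.exp (-k ω) * (A ω * B ω)|m]
      =ᵐ[μ] fun ω => C ω * Real.exp (-k ω) * μ[fun ω => A ω * B ω|m] ω :=
    condExp_mul_of_stronglyMeasurable_left (hC.mul hk.neg.measurable.exp.stronglyMeasurable)
      hF hABint
  filter_upwards [hpull, hAB, hB, hAle] with ω hpull hAB hB hAle
  calc μ[fun ω => C ω * Real.exp (-k ω) * (A ω * B ω)|m] ω
      = C ω * μ[A|m] ω := by
        rw [hpull, hAB, hB, Real.exp_neg]
        field_simp
    _ ≤ C ω := mul_le_of_le_one_right (hC0 ω) hAle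

end MeasureTheory

theorem measurable_sum_range_of_predictable {Ω : Type*} {m0 : MeasurableSpace Ω}
    {ℱ : Filtration ℕ m0} {K : ℕ → Ω → ℝ} (hK0 : Measurable[ℱ 0] (K 0))
    (hK : ∀ t, Measurable[ℱ t] (K (t + 1))) (t : ℕ) :
    Measurable[ℱ t] fun ω => ∑ i ∈ range (t + 1), K i ω := by
  induction t with
  | zero => simpa using hK0
  | succ t ih =>
    simp_rw [sum_range_succ (n := t + 1)]
    exact (ih.mono (ℱ.mono t.le_succ) le_rfl).add ((hK t).mono (ℱ.mono t.le_succ) le_rfl)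

/-- Geometric decomposition of a test supermartingale with independent noise:
if `(M_t)` is a test supermartingale for `P`, `Λ_t = log M_t`, `λ ∈ (0,1]`, `(ξ_t)`
is an adapted noise process whose increments are (conditionally) independent of the
martingale increments, and
`K_t(λ) = log E^P[exp(λ(ξ_t − ξ_{t−1})) | ℱ_{t−1}]`, then
`E_t = exp(λ(Λ_t + ξ_t) − Σ_{i≤t} K_i(λ))` is a nonnegative supermartingale for `P`
with `E^P[E_0] ≤ 1`, i.e. a test supermartingale (hence an e-process). -/
theorem noisy_test_supermartingale {Ω : Type*} {m0 : MeasurableSpace Ω}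
    (P : Measure Ω) [IsProbabilityMeasure P] (ℱ : Filtration ℕ m0)
    (M : ℕ → Ω → ℝ) (hadM : Adapted ℱ M) (hMpos : ∀ t ω, 0 < M t ω)
    (hMint : ∀ t, Integrable (M t) P) (hM0 : ∫ ω, M 0 ω ∂P ≤ 1)
    (hsuper : ∀ t, P[M (t + 1)|ℱ t] ≤ᵐ[P] M t)
    (lam : ℝ) (hlam0 : 0 < lam) (hlam1 : lam ≤ 1)
    (Λ : ℕ → Ω → ℝ) (hΛ : Λ = fun t ω => Real.log (M t ω))
    (ξ : ℕ → Ω → ℝ) (hadξ : Adapted ℱ ξ) (hξ0 : ξ 0 = fun _ => 0)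
    (K : ℕ → Ω → ℝ) (hK0 : K 0 = fun _ => 0)
    (hKmeas : ∀ t, StronglyMeasurable[ℱ t] (K (t + 1)))
    (hK : ∀ t, (fun ω => Real.exp (K (t + 1) ω)) =ᵐ[P]
      P[fun ω => Real.exp (lam * (ξ (t + 1) ω - ξ t ω))|ℱ t])
    -- the noise increment is independent of the martingale increment given the past:
    (hindep : ∀ t,
      P[fun ω => Real.exp (lam * ((Λ (t + 1) ω - Λ t ω) + (ξ (t + 1) ω - ξ t ω)))|ℱ t]
        =ᵐ[P] fun ω =>
          (P[fun ω' => Real.exp (lam * (Λ (t + 1) ω' - Λ t ω'))|ℱ t]) ω *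
          (P[fun ω' => Real.exp (lam * (ξ (t + 1) ω' - ξ t ω'))|ℱ t]) ω)
    (E : ℕ → Ω → ℝ)
    (hE : E = fun t ω =>
      Real.exp (lam * (Λ t ω + ξ t ω) - ∑ i ∈ Finset.range (t + 1), K i ω))
    (hEint : ∀ t, Integrable (E t) P) :
    Supermartingale E ℱ P ∧ (∫ ω, E 0 ω ∂P ≤ 1) ∧ ∀ t ω, 0 ≤ E t ω := by
  subst hΛ hE
  beta_reduce at hindep ⊢
  have hsumK := measurable_sum_range_of_predictable (by rw [hK0]; exact measurable_const)
    fun t => (hKmeas t).measurable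
  have hadE : StronglyAdapted ℱ fun t ω =>
      Real.exp (lam * (Real.log (M t ω) + ξ t ω) - ∑ i ∈ range (t + 1), K i ω) := fun t =>
    (((((hadM t).log).add (hadξ t)).const_mul lam).sub (hsumK t)).exp.stronglyMeasurable
  refine ⟨supermartingale_nat hadE hEint fun t => ?_, ?_, fun t ω => (Real.exp_pos _).le⟩
  · obtain ⟨hAint, hAle⟩ := condExp_exp_mul_log_sub_log_le_one (ℱ.le t)
      (hadM t).stronglyMeasurable (hMpos t) (hMpos (t + 1)) (hMint (t + 1)) (hsuper t)
      hlam0.le hlam1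
    refine condExp_le_of_condExp_mul_eq_mul (ℱ.le t) (hadE t) (fun _ => (Real.exp_pos _).le)
      (hKmeas t) hAint (fun _ => Real.exp_pos _) hAle (hK t).symm
      (by simpa only [mul_add, Real.exp_add] using hindep t) (hEint (t + 1)) fun ω => ?_
    simp only [← Real.exp_add, sum_range_succ _ (t + 1)]
    ring_nf
  · have hE0 : (fun ω => Real.exp (lam * (Real.log (M 0 ω) + ξ 0 ω) - ∑ i ∈ range (0 + 1), K i ω))
        = fun ω => M 0 ω ^ lam := by
      funext ω
      simp [hξ0, hK0, Real.rpow_def_of_pos (hMpos 0 ω), mul_comm]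
    rw [hE0]
    exact integral_rpow_le_one (hMint 0) (fun ω => (hMpos 0 ω).le) hlam0.le hlam1 hM0
end
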